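/- arXiv:2404.01390 — 5 statements merged into one kernel-verified Lean document; each statement's English description precedes it below -/
import Mathlib

section
/- Let λ ∈ ℝᵏ with λ₁ ≥ λ₂ ≥ ⋯ ≥ λₖ ≥ 0 and let t be an integer with 0 < t ≤ k. Then there exists a unique integer ι with 0 ≤ ι < t such that λ_ι > (1/(t-ι)) · Σ_{ℓ=ι+1}^{k} λ_ℓ ≥ λ_{ι+1}, with the convention λ₀ = +∞. -/
/-!
Write `g i` for the `(i+1)`-st entry of `λ` (zero past `k`) and `S i = ∑_{ℓ ≥ i} g ℓ`, so that
`S i = g i + S (i+1)`. Call `j < t` *saturated* when `(t - j) g j ≤ S j`; the second inequality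
says that `ι` is saturated, and, after subtracting `g (ι-1)` on both sides, the first says that
`ι - 1` is not. Saturation propagates upwards: from `(t - j) g j ≤ g j + S (j+1)` we get
`(t - j - 1) g (j+1) ≤ (t - j - 1) g j ≤ S (j+1)`, because `g` is nonincreasing. Moreover
`t - 1` is saturated because `S t ≥ 0`. Hence the saturated indices form a nonempty final segment
of `[0, t)`, and `ι` is its least element.
-/

theorem Nat.existsUnique_boundary_of_succ {P : ℕ → Prop} {t : ℕ} (ht : 0 < t)
    (hsucc : ∀ j, j + 1 < t → P j → P (j + 1)) (hlast : P (t - 1)) :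
    ∃! ι, ι < t ∧ (0 < ι → ¬P (ι - 1)) ∧ P ι := by
  classical
  have hex : ∃ j, P j := ⟨t - 1, hlast⟩
  have hup : ∀ i j, i ≤ j → j < t → P i → P j := by
    intro i j hij
    induction j, hij using Nat.le_induction with
    | base => exact fun _ h => h
    | succ j _ ih => exact fun hj h => hsucc j hj (ih (by omega) h)
  refine ⟨Nat.find hex, ⟨?_, fun _ => Nat.find_min hex (by omega), Nat.find_spec hex⟩, ?_⟩
  · have := Nat.find_min' hex hlast
    omega
  · rintro y ⟨hyt, hy0, hy⟩
    have hle := Nat.find_min' hex hy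
    by_contra hne
    exact hy0 (by omega) (hup _ _ (by omega) (by omega) (Nat.find_spec hex))

section TailThreshold

variable {K : Type*} [Field K] [LinearOrder K] [IsStrictOrderedRing K]
  {g S : ℕ → K} {i j t : ℕ}

theorem sub_mul_le_tail_succ (hg : g (j + 1) ≤ g j) (hS : S j = g j + S (j + 1))
    (hj : j + 1 < t) (h : ((t : K) - j) * g j ≤ S j) :
    ((t : K) - (j + 1 : ℕ)) * g (j + 1) ≤ S (j + 1) := by
  have hpos : (0 : K) ≤ t - (j + 1 : ℕ) := sub_nonneg.mpr (by exact_mod_cast hj.le)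
  calc ((t : K) - (j + 1 : ℕ)) * g (j + 1) ≤ ((t : K) - (j + 1 : ℕ)) * g j :=
        mul_le_mul_of_nonneg_left hg hpos
    _ ≤ S (j + 1) := by push_cast at h ⊢; linarith

theorem sub_mul_le_tail_pred_self (hS : S (t - 1) = g (t - 1) + S t) (hSt : 0 ≤ S t)
    (ht : 0 < t) : ((t : K) - (t - 1 : ℕ)) * g (t - 1) ≤ S (t - 1) := by
  rw [Nat.cast_sub ht, hS]
  push_cast
  linarith

theorem tail_div_lt_pred_iff (hS : S (i - 1) = g (i - 1) + S i) (hi : 0 < i) (hit : i < t) :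
    S i / ((t : K) - i) < g (i - 1) ↔ ¬((t : K) - (i - 1 : ℕ)) * g (i - 1) ≤ S (i - 1) := by
  have hpos : (0 : K) < t - i := sub_pos.mpr (by exact_mod_cast hit)
  rw [div_lt_iff₀ hpos, not_le, hS, Nat.cast_sub hi]
  push_cast
  constructor <;> intro h <;> linarith

theorem existsUnique_tail_threshold (hg : Antitone g) (hS : ∀ i, S i = g i + S (i + 1))
    (hSt : 0 ≤ S t) (ht : 0 < t) :
    ∃! ι, ι < t ∧ (0 < ι → S ι / ((t : K) - ι) < g (ι - 1)) ∧ g ι ≤ S ι / ((t : K) - ι) := by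
  have key := Nat.existsUnique_boundary_of_succ (P := fun j => ((t : K) - j) * g j ≤ S j) ht
    (fun j hj => sub_mul_le_tail_succ (hg j.le_succ) (hS j) hj)
    (sub_mul_le_tail_pred_self (by rw [hS, Nat.sub_add_cancel ht]) hSt ht)
  refine (existsUnique_congr fun ι => ?_).mp key
  refine and_congr_right fun hιt => and_congr ?_ ?_
  · refine imp_congr_right fun hι => (tail_div_lt_pred_iff ?_ hι hιt).symm
    rw [hS, Nat.sub_add_cancel hι]
  · rw [le_div_iff₀ (sub_pos.mpr (by exact_mod_cast hιt)), mul_comm]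

end TailThreshold

section ZeroExtend

variable {M : Type*} {k : ℕ}

def zeroExtend [Zero M] (f : Fin k → M) (i : ℕ) : M :=
  if h : i < k then f ⟨i, h⟩ else 0

theorem zeroExtend_of_lt [Zero M] (f : Fin k → M) {i : ℕ} (h : i < k) :
    zeroExtend f i = f ⟨i, h⟩ :=
  dif_pos h

theorem antitone_zeroExtend [Zero M] [Preorder M] {f : Fin k → M} (hf : Antitone f)
    (hnn : ∀ i, 0 ≤ f i) : Antitone (zeroExtend f) := by
  intro i j hij
  unfold zeroExtend
  by_cases hj : j < k
  · rw [dif_pos hj, dif_pos (hij.trans_lt hj)]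
    exact hf (Fin.mk_le_mk.mpr hij)
  · rw [dif_neg hj]
    split
    · exact hnn _
    · exact le_rfl

def tailSum [AddCommMonoid M] (f : Fin k → M) (i : ℕ) : M :=
  ∑ ℓ : Fin k, if i ≤ (ℓ : ℕ) then f ℓ else 0

theorem tailSum_eq_add_tailSum_succ [AddCommMonoid M] (f : Fin k → M) (i : ℕ) :
    tailSum f i = zeroExtend f i + tailSum f (i + 1) := by
  have hsplit : ∀ ℓ : Fin k, (if i ≤ (ℓ : ℕ) then f ℓ else 0)
      = (if (ℓ : ℕ) = i then f ℓ else 0) + (if i + 1 ≤ (ℓ : ℕ) then f ℓ else 0) := by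
    intro ℓ
    rcases lt_trichotomy (ℓ : ℕ) i with h | h | h
    · simp [h.ne, h.not_ge, (h.trans (Nat.lt_succ_self i)).not_ge]
    · simp [h]
    · simp [h.ne', h.le, Nat.succ_le_of_lt h]
  have hdiag : ∑ ℓ : Fin k, (if (ℓ : ℕ) = i then f ℓ else 0) = zeroExtend f i := by
    unfold zeroExtend
    split
    · next h =>
      rw [Finset.sum_eq_single ⟨i, h⟩ (fun ℓ _ hℓ => if_neg (Fin.val_ne_iff.mpr hℓ))
        (by simp), if_pos rfl]
    · next h => exact Finset.sum_eq_zero fun ℓ _ => if_neg (by omega)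
  rw [tailSum, Finset.sum_congr rfl fun ℓ _ => hsplit ℓ, Finset.sum_add_distrib, hdiag, tailSum]

theorem tailSum_nonneg [AddCommMonoid M] [PartialOrder M] [IsOrderedAddMonoid M]
    {f : Fin k → M} (hnn : ∀ i, 0 ≤ f i) (i : ℕ) : 0 ≤ tailSum f i :=
  Finset.sum_nonneg fun ℓ _ => by split <;> simp [hnn ℓ]

end ZeroExtend

/-- Nikolov's lemma: for a nonincreasing nonnegative vector `lam` (1-indexed entry `ℓ` is
`lam ⟨ℓ-1⟩`) and `0 < t ≤ k`, there is a unique integer `ι` with `0 ≤ ι < t` such that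
`lam_ι > (1/(t-ι)) ∑_{ℓ=ι+1}^k lam_ℓ ≥ lam_{ι+1}`, with the convention `lam₀ = +∞`. -/
theorem stmt_1 (k t : ℕ) (lam : Fin k → ℝ)
    (ht : 0 < t) (htk : t ≤ k)
    (hsort : ∀ i j : Fin k, i ≤ j → lam j ≤ lam i)
    (hnn : ∀ i, 0 ≤ lam i) :
    ∃! ι : ℕ, ∃ hι : ι < t,
      (∀ _ : 0 < ι,
        (∑ ℓ : Fin k, if ι ≤ (ℓ : ℕ) then lam ℓ else 0) / ((t : ℝ) - ι)
          < lam ⟨ι - 1, by omega⟩) ∧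
      lam ⟨ι, by omega⟩ ≤
        (∑ ℓ : Fin k, if ι ≤ (ℓ : ℕ) then lam ℓ else 0) / ((t : ℝ) - ι) := by
  have key := existsUnique_tail_threshold (antitone_zeroExtend (fun i j => hsort i j) hnn)
    (tailSum_eq_add_tailSum_succ lam) (tailSum_nonneg hnn t) ht
  refine (existsUnique_congr fun ι => ?_).mp key
  constructor
  · rintro ⟨hι, hpred, hcur⟩
    rw [zeroExtend_of_lt lam (i := ι - 1) (by omega)] at hpred
    rw [zeroExtend_of_lt lam (by omega)] at hcur
    exact ⟨hι, hpred, hcur⟩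
  · rintro ⟨hι, hpred, hcur⟩
    rw [zeroExtend_of_lt lam (i := ι - 1) (by omega), zeroExtend_of_lt lam (by omega)]
    exact ⟨hι, hpred, hcur⟩
end

section
/- For a symmetric positive definite k×k matrix Θ and an integer t with 0 < t ≤ k, the supremum over positive semidefinite k×k matrices W of rank at least t of the quantity Σ_{ℓ=1}^t log(λ_ℓ(W)) − Trace(Θ W) equals −t − Σ_{ℓ=k−t+1}^k log(λ_ℓ(Θ)), where λ_ℓ denotes the ℓ-th greatest eigenvalue. Moreover, the supremum is attained at the matrix W = Σ_{ℓ=1}^t (1/β̂_ℓ) v̂_ℓ v̂_ℓᵀ, where Θ = Σ_ℓ β̂_ℓ v̂_ℓ v̂_ℓᵀ is a spectral decomposition of Θ with eigenvalues sorted nondecreasingly. -/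
/-!
Write `Θ = Vᵀ diag(β) V` and `W = Qᵀ diag(λ) Q` with `V`, `Q` orthogonal and `λ = λ(W)`
decreasing. Then `Trace(Θ W) = ∑ᵢⱼ βᵢ λⱼ Gᵢⱼ²` with `G = V Qᵀ` orthogonal, so `(Gᵢⱼ²)` is doubly
stochastic; by Birkhoff's theorem and the rearrangement inequality (`β` increasing, `λ`
decreasing), `Trace(Θ W) ≥ ∑ᵢ βᵢ λᵢ`. As `rank W ≥ t` makes `λ₁, …, λₜ` positive, the objective is
at most `∑_{i ≤ t} (log λᵢ - βᵢ λᵢ)`, and termwise `log x - b x ≤ -1 - log b`, with equality at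
`x = 1 / b`: this is attained by `Ŵ`, whose eigenvalues are `1 / β₁, …, 1 / βₜ, 0, …, 0`.
-/

/-- `descEig W i` is the `(i+1)`-th greatest eigenvalue of the real symmetric matrix `W`
(junk value `0` if `W` is not symmetric). -/
noncomputable def descEig {k : ℕ} (W : Matrix (Fin k) (Fin k) ℝ) : Fin k → ℝ :=
  fun i => if h : W.IsHermitian then (h.eigenvalues ∘ Tuple.sort h.eigenvalues) i.rev else 0

open Matrix Finset

section

variable {n : Type*} [Fintype n] [DecidableEq n]

theorem sum_smul_vecMulVec_eq {m R : Type*} [CommSemiring R] (c : n → R) (v : n → m → R) :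
    ∑ ℓ, c ℓ • vecMulVec (v ℓ) (v ℓ) = (of v)ᵀ * diagonal c * of v := by
  ext a b
  rw [Matrix.mul_assoc]
  simp only [Matrix.sum_apply, Matrix.smul_apply, vecMulVec_apply, smul_eq_mul, mul_apply,
    diagonal_apply, ite_mul, zero_mul, sum_ite_eq, mem_univ, if_true, transpose_apply, of_apply]
  exact sum_congr rfl fun _ _ => by ring

theorem isHermitian_transpose_mul_diagonal_mul (V : Matrix n n ℝ) (d : n → ℝ) :
    (Vᵀ * diagonal d * V).IsHermitian := by
  simpa using isHermitian_conjTranspose_mul_mul V (isHermitian_diagonal d)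

theorem posSemidef_transpose_mul_diagonal_mul (V : Matrix n n ℝ) {d : n → ℝ} (hd : ∀ i, 0 ≤ d i) :
    (Vᵀ * diagonal d * V).PosSemidef := by
  simpa using (posSemidef_diagonal_iff.mpr hd).conjTranspose_mul_mul_same V

theorem rank_transpose_mul_diagonal_mul {V : Matrix n n ℝ} (hV : V * Vᵀ = 1) (d : n → ℝ) :
    (Vᵀ * diagonal d * V).rank = Fintype.card {i // d i ≠ 0} := by
  rw [rank_mul_eq_left_of_isUnit_det V _ (isUnit_det_of_right_inverse hV),
    rank_mul_eq_right_of_isUnit_det Vᵀ _ (isUnit_det_of_left_inverse hV), rank_diagonal]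

theorem map_eigenvalues_transpose_mul_diagonal_mul {V : Matrix n n ℝ} (hV : V * Vᵀ = 1)
    {d : n → ℝ} (hH : (Vᵀ * diagonal d * V).IsHermitian) :
    univ.val.map hH.eigenvalues = univ.val.map d := by
  have hcharpoly : (Vᵀ * diagonal d * V).charpoly = (diagonal d).charpoly := by
    rw [Matrix.mul_assoc, charpoly_mul_comm, Matrix.mul_assoc, hV, Matrix.mul_one]
  have hroots := hH.roots_charpoly_eq_eigenvalues
  rw [hcharpoly, charpoly_diagonal,
    Polynomial.roots_prod _ _ (prod_ne_zero_iff.mpr fun i _ => Polynomial.X_sub_C_ne_zero _)]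
    at hroots
  simpa using hroots.symm

theorem trace_transpose_mul_diagonal_mul_mul_eq (P Q : Matrix n n ℝ) (a b : n → ℝ) :
    ((Pᵀ * diagonal a * P) * (Qᵀ * diagonal b * Q)).trace
      = a ⬝ᵥ ((of fun i j => (P * Qᵀ) i j ^ 2) *ᵥ b) := by
  rw [show Pᵀ * diagonal a * P * (Qᵀ * diagonal b * Q)
      = Pᵀ * (diagonal a * (P * Qᵀ) * diagonal b * Q) by simp only [Matrix.mul_assoc],
    trace_mul_comm, show diagonal a * (P * Qᵀ) * diagonal b * Q * Pᵀ
      = diagonal a * (P * Qᵀ) * diagonal b * (P * Qᵀ)ᵀ by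
    simp only [transpose_mul, transpose_transpose, Matrix.mul_assoc]]
  generalize P * Qᵀ = G
  simp only [trace, Matrix.diag_apply, mul_apply, diagonal_apply, ite_mul, zero_mul, mul_ite,
    mul_zero, sum_ite_eq, sum_ite_eq', mem_univ, if_true, mul_sum, dotProduct, mulVec, of_apply,
    transpose_apply]
  exact sum_congr rfl fun _ _ => sum_congr rfl fun _ _ => by ring

theorem of_sq_mem_doublyStochastic {G : Matrix n n ℝ} (hG : G * Gᵀ = 1) :
    (of fun i j => G i j ^ 2) ∈ doublyStochastic ℝ n := by
  have hG' : Gᵀ * G = 1 := mul_eq_one_comm.mp hG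
  refine mem_doublyStochastic_iff_sum.mpr ⟨fun i j => sq_nonneg _, fun i => ?_, fun j => ?_⟩
  · simpa [mul_apply, sq] using congrFun (congrFun hG i) i
  · simpa [mul_apply, sq] using congrFun (congrFun hG' j) j

theorem Antivary.sum_mul_le_dotProduct_mulVec_of_mem_doublyStochastic {a b : n → ℝ}
    (hab : Antivary a b) {M : Matrix n n ℝ} (hM : M ∈ doublyStochastic ℝ n) :
    ∑ i, a i * b i ≤ a ⬝ᵥ (M *ᵥ b) := by
  obtain ⟨w, hw0, hw1, rfl⟩ := exists_eq_sum_perm_of_mem_doublyStochastic hM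
  calc ∑ i, a i * b i = ∑ σ, w σ * ∑ i, a i * b i := by rw [← sum_mul, hw1, one_mul]
    _ ≤ ∑ σ, w σ * ∑ i, a i * b (σ i) :=
        sum_le_sum fun σ _ => mul_le_mul_of_nonneg_left hab.sum_mul_le_sum_mul_comp_perm (hw0 σ)
    _ = a ⬝ᵥ ((∑ σ, w σ • σ.permMatrix ℝ) *ᵥ b) := by
        simp only [sum_mulVec, smul_mulVec, permMatrix_mulVec, dotProduct, Finset.sum_apply,
          Pi.smul_apply, Function.comp_apply, smul_eq_mul, mul_sum]
        rw [sum_comm]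
        exact sum_congr rfl fun _ _ => sum_congr rfl fun _ _ => by ring

theorem sum_mul_le_trace_transpose_mul_diagonal_mul_mul {P Q : Matrix n n ℝ} (hP : P * Pᵀ = 1)
    (hQ : Q * Qᵀ = 1) {a b : n → ℝ} (hab : Antivary a b) :
    ∑ i, a i * b i ≤ ((Pᵀ * diagonal a * P) * (Qᵀ * diagonal b * Q)).trace := by
  have hG : P * Qᵀ * (P * Qᵀ)ᵀ = 1 := by
    rw [transpose_mul, transpose_transpose, Matrix.mul_assoc, ← Matrix.mul_assoc Qᵀ,
      mul_eq_one_comm.mp hQ, Matrix.one_mul, hP]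
  rw [trace_transpose_mul_diagonal_mul_mul_eq]
  exact hab.sum_mul_le_dotProduct_mulVec_of_mem_doublyStochastic (of_sq_mem_doublyStochastic hG)

end

theorem Real.log_sub_mul_le {b x : ℝ} (hb : 0 < b) (hx : 0 < x) :
    Real.log x - b * x ≤ -1 - Real.log b := by
  have h := Real.log_le_sub_one_of_pos (mul_pos hb hx)
  rw [Real.log_mul hb.ne' hx.ne'] at h
  linarith

section DescEig

variable {k : ℕ}

theorem Matrix.IsHermitian.descEig_eq {W : Matrix (Fin k) (Fin k) ℝ} (hW : W.IsHermitian) :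
    descEig W = hW.eigenvalues ∘ (Fin.revPerm.trans (Tuple.sort hW.eigenvalues)) := by
  funext i
  simp only [descEig, dif_pos hW]
  rfl

theorem Matrix.IsHermitian.antitone_descEig {W : Matrix (Fin k) (Fin k) ℝ} (hW : W.IsHermitian) :
    Antitone (descEig W) := by
  rw [hW.descEig_eq]
  exact fun i j hij => Tuple.monotone_sort _ (Fin.rev_le_rev.mpr hij)

theorem Matrix.PosSemidef.descEig_nonneg {W : Matrix (Fin k) (Fin k) ℝ} (hW : W.PosSemidef)
    (i : Fin k) : 0 ≤ descEig W i := by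
  rw [hW.1.descEig_eq]
  exact hW.eigenvalues_nonneg _

theorem Matrix.PosDef.descEig_pos {W : Matrix (Fin k) (Fin k) ℝ} (hW : W.PosDef) (i : Fin k) :
    0 < descEig W i := by
  rw [hW.1.descEig_eq]
  exact hW.eigenvalues_pos _

theorem Matrix.IsHermitian.exists_eq_transpose_mul_diagonal_descEig_mul
    {W : Matrix (Fin k) (Fin k) ℝ} (hW : W.IsHermitian) :
    ∃ Q : Matrix (Fin k) (Fin k) ℝ, Q * Qᵀ = 1 ∧ W = Qᵀ * diagonal (descEig W) * Q := by
  set σ := Fin.revPerm.trans (Tuple.sort hW.eigenvalues)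
  set U : Matrix (Fin k) (Fin k) ℝ := (hW.eigenvectorUnitary : Matrix (Fin k) (Fin k) ℝ)
  have hUU : Uᵀ * U = 1 := by
    simpa [U, star_eq_conjTranspose] using Unitary.star_mul_self_of_mem hW.eigenvectorUnitary.2
  refine ⟨(U.submatrix id σ)ᵀ, ?_, ?_⟩
  · rw [transpose_transpose, transpose_submatrix, ← submatrix_mul _ _ _ _ _ Function.bijective_id,
      hUU, submatrix_one_equiv]
  · have hspec := hW.spectral_theorem
    simp only [Unitary.conjStarAlgAut_apply, RCLike.ofReal_real_eq_id, CompTriple.comp_eq] at hspec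
    rw [hW.descEig_eq, ← submatrix_diagonal_equiv, transpose_transpose, transpose_submatrix,
      submatrix_mul_equiv, submatrix_mul_equiv, submatrix_id_id]
    simpa [U, star_eq_conjTranspose] using hspec

theorem Matrix.PosSemidef.descEig_pos_of_lt_rank {W : Matrix (Fin k) (Fin k) ℝ}
    (hW : W.PosSemidef) {i : Fin k} (hi : (i : ℕ) < W.rank) : 0 < descEig W i := by
  refine (hW.descEig_nonneg i).lt_of_ne fun hzero => hi.not_ge ?_
  obtain ⟨Q, hQ, hWQ⟩ := hW.1.exists_eq_transpose_mul_diagonal_descEig_mul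
  have hsupp : ∀ j, descEig W j ≠ 0 → (j : ℕ) < i := fun j hj => by
    by_contra! hij
    exact hj (le_antisymm (hzero ▸ hW.1.antitone_descEig hij) (hW.descEig_nonneg j))
  calc W.rank = Fintype.card {j // descEig W j ≠ 0} := by
        conv_lhs => rw [hWQ]
        exact rank_transpose_mul_diagonal_mul hQ _
    _ ≤ Fintype.card {j : Fin k // (j : ℕ) < i} := Fintype.card_subtype_mono _ _ hsupp
    _ = i := by rw [Fintype.card_subtype, Fin.card_filter_val_lt, min_eq_right i.isLt.le]

theorem Fin.univ_val_map_rev : (univ.val : Multiset (Fin k)).map Fin.rev = univ.val :=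
  Multiset.map_univ_val_equiv Fin.revPerm

theorem descEig_eq_of_map_eigenvalues_eq {A : Matrix (Fin k) (Fin k) ℝ} (hA : A.IsHermitian)
    {d : Fin k → ℝ} (hd : Antitone d) (h : univ.val.map hA.eigenvalues = univ.val.map d) :
    descEig A = d := by
  have hsorted : hA.eigenvalues ∘ Tuple.sort hA.eigenvalues = d ∘ Fin.rev := by
    refine List.ofFn_injective (List.Perm.eq_of_sortedLE (Tuple.monotone_sort _).sortedLE_ofFn
      (hd.comp Fin.rev_anti).sortedLE_ofFn ?_)
    rw [← Multiset.coe_eq_coe, ← Fin.univ_val_map, ← Fin.univ_val_map, ← Multiset.map_map,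
      Multiset.map_univ_val_equiv, h, ← Multiset.map_map, Fin.univ_val_map_rev]
  funext i
  simpa [hA.descEig_eq] using congrFun hsorted i.rev

theorem descEig_transpose_mul_diagonal_mul_of_antitone {V : Matrix (Fin k) (Fin k) ℝ}
    (hV : V * Vᵀ = 1) {d : Fin k → ℝ} (hd : Antitone d) : descEig (Vᵀ * diagonal d * V) = d :=
  descEig_eq_of_map_eigenvalues_eq _ hd
    (map_eigenvalues_transpose_mul_diagonal_mul hV (isHermitian_transpose_mul_diagonal_mul V d))

theorem descEig_transpose_mul_diagonal_mul_of_monotone {V : Matrix (Fin k) (Fin k) ℝ}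
    (hV : V * Vᵀ = 1) {d : Fin k → ℝ} (hd : Monotone d) :
    descEig (Vᵀ * diagonal d * V) = d ∘ Fin.rev := by
  refine descEig_eq_of_map_eigenvalues_eq (isHermitian_transpose_mul_diagonal_mul V d)
    (hd.comp_antitone Fin.rev_anti) ?_
  rw [map_eigenvalues_transpose_mul_diagonal_mul hV (isHermitian_transpose_mul_diagonal_mul V d),
    ← Multiset.map_map, Fin.univ_val_map_rev]

end DescEig

theorem sum_ite_lt_neg_one_sub_eq {k t : ℕ} (htk : t ≤ k) (f : Fin k → ℝ) :
    ∑ i : Fin k, (if (i : ℕ) < t then -1 - f i else 0)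
      = -(t : ℝ) - ∑ i : Fin k, if k - t ≤ (i : ℕ) then f i.rev else 0 := by
  have hrev : ∑ i : Fin k, (if k - t ≤ (i : ℕ) then f i.rev else 0)
      = ∑ i : Fin k, if (i : ℕ) < t then f i else 0 := by
    rw [← Equiv.sum_comp Fin.revPerm]
    refine sum_congr rfl fun i _ => ?_
    simp only [Fin.revPerm_apply, Fin.rev_rev, Fin.val_rev]
    exact if_congr (by omega) rfl rfl
  have hcard : ∑ i : Fin k, (if (i : ℕ) < t then (1 : ℝ) else 0) = t := by
    rw [sum_boole, Fin.card_filter_val_lt, min_eq_right htk]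
  rw [hrev, ← hcard, ← sum_neg_distrib, ← sum_sub_distrib]
  exact sum_congr rfl fun i _ => by split_ifs <;> ring

section Truncation

variable {k t : ℕ} {β : Fin k → ℝ}

/-- The eigenvalues `1 / β̂_ℓ` (`ℓ ≤ t`) and `0` of the maximizer `Ŵ`. -/
noncomputable def truncInv (t : ℕ) (β : Fin k → ℝ) : Fin k → ℝ :=
  fun i => if (i : ℕ) < t then (β i)⁻¹ else 0

theorem truncInv_nonneg (hβpos : ∀ i, 0 < β i) (i : Fin k) : 0 ≤ truncInv t β i := by
  unfold truncInv
  split_ifs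
  exacts [(inv_pos.mpr (hβpos i)).le, le_rfl]

theorem antitone_truncInv (hβ : Monotone β) (hβpos : ∀ i, 0 < β i) : Antitone (truncInv t β) := by
  intro i j hij
  unfold truncInv
  split_ifs with hj hi hi
  · exact inv_anti₀ (hβpos i) (hβ hij)
  · exact absurd (lt_of_le_of_lt (Fin.le_def.mp hij) hj) hi
  · exact (inv_pos.mpr (hβpos i)).le
  · exact le_rfl

theorem rank_transpose_mul_diagonal_mul_truncInv {V : Matrix (Fin k) (Fin k) ℝ}
    (hV : V * Vᵀ = 1) (htk : t ≤ k) (hβpos : ∀ i, 0 < β i) :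
    (Vᵀ * diagonal (truncInv t β) * V).rank = t := by
  have hsupp : ∀ i, truncInv t β i ≠ 0 ↔ (i : ℕ) < t := fun i => by
    unfold truncInv
    split_ifs with hi
    · simpa [hi] using (hβpos i).ne'
    · simpa using hi
  rw [rank_transpose_mul_diagonal_mul hV, Fintype.card_subtype, filter_congr fun i _ => hsupp i,
    Fin.card_filter_val_lt, min_eq_right htk]

theorem sum_log_descEig_sub_trace_truncInv {V : Matrix (Fin k) (Fin k) ℝ} (hV : V * Vᵀ = 1)
    (hβ : Monotone β) (hβpos : ∀ i, 0 < β i) :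
    (∑ i : Fin k, if (i : ℕ) < t then
        Real.log (descEig (Vᵀ * diagonal (truncInv t β) * V) i) else 0)
      - (Vᵀ * diagonal β * V * (Vᵀ * diagonal (truncInv t β) * V)).trace
      = ∑ i : Fin k, if (i : ℕ) < t then -1 - Real.log (β i) else 0 := by
  rw [descEig_transpose_mul_diagonal_mul_of_antitone hV (antitone_truncInv hβ hβpos),
    trace_transpose_mul_diagonal_mul_mul_eq, hV]
  have hone : (of fun i j => (1 : Matrix (Fin k) (Fin k) ℝ) i j ^ 2) = 1 := by
    ext i j
    by_cases hij : i = j <;> simp [one_apply, hij]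
  rw [hone, one_mulVec, dotProduct, ← sum_sub_distrib]
  refine sum_congr rfl fun i _ => ?_
  unfold truncInv
  split_ifs
  · rw [Real.log_inv, mul_inv_cancel₀ (hβpos i).ne']
    ring
  · simp

end Truncation

theorem sum_log_descEig_sub_trace_le {k t : ℕ} {V : Matrix (Fin k) (Fin k) ℝ}
    (hV : V * Vᵀ = 1) {β : Fin k → ℝ} (hβ : Monotone β) (hβpos : ∀ i, 0 < β i)
    {W : Matrix (Fin k) (Fin k) ℝ} (hW : W.PosSemidef) (ht : t ≤ W.rank) :
    (∑ i : Fin k, if (i : ℕ) < t then Real.log (descEig W i) else 0)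
        - (Vᵀ * diagonal β * V * W).trace
      ≤ ∑ i : Fin k, if (i : ℕ) < t then -1 - Real.log (β i) else 0 := by
  obtain ⟨Q, hQ, hWQ⟩ := hW.1.exists_eq_transpose_mul_diagonal_descEig_mul
  have htrace : ∑ i, β i * descEig W i ≤ (Vᵀ * diagonal β * V * W).trace := by
    conv_rhs => rw [hWQ]
    exact sum_mul_le_trace_transpose_mul_diagonal_mul_mul hV hQ (hβ.antivary hW.1.antitone_descEig)
  have htrunc : ∑ i : Fin k, (if (i : ℕ) < t then β i * descEig W i else 0)
      ≤ ∑ i, β i * descEig W i := sum_le_sum fun i _ => by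
    split_ifs
    exacts [le_rfl, mul_nonneg (hβpos i).le (hW.descEig_nonneg i)]
  calc _ ≤ ∑ i : Fin k, ((if (i : ℕ) < t then Real.log (descEig W i) else 0)
          - if (i : ℕ) < t then β i * descEig W i else 0) := by
        rw [sum_sub_distrib]
        linarith
    _ ≤ _ := sum_le_sum fun i _ => by
        split_ifs with hi
        · exact Real.log_sub_mul_le (hβpos i) (hW.descEig_pos_of_lt_rank (hi.trans_le ht))
        · simp

theorem stmt_3_general (k t : ℕ) (htk : t ≤ k)
    (Θ : Matrix (Fin k) (Fin k) ℝ) (hΘ : Θ.PosDef)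
    (β : Fin k → ℝ) (v : Fin k → Fin k → ℝ)
    (hβmono : Monotone β)
    (horth : ∀ i j : Fin k, (∑ a, v i a * v j a) = if i = j then 1 else 0)
    (hdecomp : Θ = ∑ ℓ : Fin k, β ℓ • Matrix.vecMulVec (v ℓ) (v ℓ)) :
    (((∑ ℓ : Fin k, if (ℓ : ℕ) < t then (β ℓ)⁻¹ • Matrix.vecMulVec (v ℓ) (v ℓ) else 0
        : Matrix (Fin k) (Fin k) ℝ)).PosSemidef ∧
      t ≤ (∑ ℓ : Fin k, if (ℓ : ℕ) < t then (β ℓ)⁻¹ • Matrix.vecMulVec (v ℓ) (v ℓ) else 0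
        : Matrix (Fin k) (Fin k) ℝ).rank ∧
      (∑ i : Fin k, if (i : ℕ) < t then
          Real.log (descEig (∑ ℓ : Fin k, if (ℓ : ℕ) < t then
            (β ℓ)⁻¹ • Matrix.vecMulVec (v ℓ) (v ℓ) else 0) i) else 0)
        - (Θ * (∑ ℓ : Fin k, if (ℓ : ℕ) < t then
            (β ℓ)⁻¹ • Matrix.vecMulVec (v ℓ) (v ℓ) else 0)).trace
        = -(t : ℝ) - ∑ i : Fin k, if k - t ≤ (i : ℕ) then Real.log (descEig Θ i) else 0) ∧
    (∀ W : Matrix (Fin k) (Fin k) ℝ, W.PosSemidef → t ≤ W.rank →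
      (∑ i : Fin k, if (i : ℕ) < t then Real.log (descEig W i) else 0) - (Θ * W).trace
        ≤ -(t : ℝ) - ∑ i : Fin k, if k - t ≤ (i : ℕ) then Real.log (descEig Θ i) else 0) := by
  set V : Matrix (Fin k) (Fin k) ℝ := of v
  have hV : V * Vᵀ = 1 := by
    ext i j
    simpa [V, mul_apply, one_apply] using horth i j
  have hΘV : Θ = Vᵀ * diagonal β * V := hdecomp.trans (sum_smul_vecMulVec_eq β v)
  have hdescΘ : descEig Θ = β ∘ Fin.rev :=
    hΘV ▸ descEig_transpose_mul_diagonal_mul_of_monotone hV hβmono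
  have hβpos : ∀ i, 0 < β i := fun i => by simpa [hdescΘ] using hΘ.descEig_pos i.rev
  have hŴ : (∑ ℓ : Fin k, if (ℓ : ℕ) < t then (β ℓ)⁻¹ • vecMulVec (v ℓ) (v ℓ) else 0)
      = Vᵀ * diagonal (truncInv t β) * V := by
    rw [← sum_smul_vecMulVec_eq]
    exact sum_congr rfl fun ℓ _ => by simp only [truncInv, ite_smul, zero_smul]
  have hbound : -(t : ℝ) - ∑ i : Fin k, (if k - t ≤ (i : ℕ) then Real.log (descEig Θ i) else 0)
      = ∑ i : Fin k, if (i : ℕ) < t then -1 - Real.log (β i) else 0 := by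
    simp only [hdescΘ, Function.comp_apply]
    exact (sum_ite_lt_neg_one_sub_eq htk fun i => Real.log (β i)).symm
  rw [hŴ, hbound, hΘV]
  refine ⟨⟨posSemidef_transpose_mul_diagonal_mul V (truncInv_nonneg hβpos),
    (rank_transpose_mul_diagonal_mul_truncInv hV htk hβpos).ge,
    sum_log_descEig_sub_trace_truncInv hV hβmono hβpos⟩,
    fun W hW hrank => sum_log_descEig_sub_trace_le hV hβmono hβpos hW hrank⟩

/-- For `Θ ≻ 0` and `0 < t ≤ k`, the supremum over positive semidefinite `W` with
`rank W ≥ t` of `∑_{ℓ=1}^t log λ_ℓ(W) − Trace(Θ W)` equals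
`−t − ∑_{ℓ=k−t+1}^k log λ_ℓ(Θ)`, and it is attained at
`Ŵ = ∑_{ℓ=1}^t (1/β_ℓ) v_ℓ v_ℓᵀ`, where `Θ = ∑_ℓ β_ℓ v_ℓ v_ℓᵀ` is a spectral
decomposition of `Θ` with eigenvalues sorted nondecreasingly. -/
theorem stmt_3 (k t : ℕ) (ht : 0 < t) (htk : t ≤ k)
    (Θ : Matrix (Fin k) (Fin k) ℝ) (hΘ : Θ.PosDef)
    (β : Fin k → ℝ) (v : Fin k → Fin k → ℝ)
    (hβmono : Monotone β)
    (horth : ∀ i j : Fin k, (∑ a, v i a * v j a) = if i = j then 1 else 0)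
    (hdecomp : Θ = ∑ ℓ : Fin k, β ℓ • Matrix.vecMulVec (v ℓ) (v ℓ)) :
    (((∑ ℓ : Fin k, if (ℓ : ℕ) < t then (β ℓ)⁻¹ • Matrix.vecMulVec (v ℓ) (v ℓ) else 0
        : Matrix (Fin k) (Fin k) ℝ)).PosSemidef ∧
      t ≤ (∑ ℓ : Fin k, if (ℓ : ℕ) < t then (β ℓ)⁻¹ • Matrix.vecMulVec (v ℓ) (v ℓ) else 0
        : Matrix (Fin k) (Fin k) ℝ).rank ∧
      (∑ i : Fin k, if (i : ℕ) < t then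
          Real.log (descEig (∑ ℓ : Fin k, if (ℓ : ℕ) < t then
            (β ℓ)⁻¹ • Matrix.vecMulVec (v ℓ) (v ℓ) else 0) i) else 0)
        - (Θ * (∑ ℓ : Fin k, if (ℓ : ℕ) < t then
            (β ℓ)⁻¹ • Matrix.vecMulVec (v ℓ) (v ℓ) else 0)).trace
        = -(t : ℝ) - ∑ i : Fin k, if k - t ≤ (i : ℕ) then Real.log (descEig Θ i) else 0) ∧
    (∀ W : Matrix (Fin k) (Fin k) ℝ, W.PosSemidef → t ≤ W.rank →
      (∑ i : Fin k, if (i : ℕ) < t then Real.log (descEig W i) else 0) - (Θ * W).trace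
        ≤ -(t : ℝ) - ∑ i : Fin k, if k - t ≤ (i : ℕ) then Real.log (descEig Θ i) else 0) :=
  stmt_3_general k t htk Θ hΘ β v hβmono horth hdecomp
end

section
/- For a symmetric k×k matrix Θ that is not positive definite and an integer t with 0 < t ≤ k, the supremum over positive semidefinite k×k matrices W of rank at least t of Σ_{ℓ=1}^t log(λ_ℓ(W)) − Trace(Θ W) equals +∞. -/
namespace Matrix

variable {n : Type*} [Fintype n]

lemma exists_dotProduct_mulVec_nonpos_of_not_posDef {A : Matrix n n ℝ} (hA : A.IsHermitian)
    (h : ¬ A.PosDef) : ∃ x ≠ 0, x ⬝ᵥ (A *ᵥ x) ≤ 0 := by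
  contrapose! h
  exact .of_dotProduct_mulVec_pos hA fun x hx => by simpa using h x hx

lemma posSemidef_smul_vecMulVec_self (x : n → ℝ) {s : ℝ} (hs : 0 ≤ s) :
    (s • vecMulVec x x).PosSemidef := by
  simpa using (posSemidef_vecMulVec_self_star x).smul hs

variable [DecidableEq n]

lemma mem_spectrum_of_mulVec_eq_smul {K : Type*} [Field K] {A : Matrix n n K} {x : n → K}
    {μ : K} (hx : x ≠ 0) (h : A *ᵥ x = μ • x) : μ ∈ spectrum K A := by
  rw [← spectrum_toLin']
  exact Module.End.HasEigenvalue.mem_spectrum <|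
    Module.End.hasEigenvalue_of_hasEigenvector ⟨Module.End.mem_eigenspace_iff.mpr h, hx⟩

lemma IsHermitian.one_le_eigenvalues {A : Matrix n n ℝ} (hA : A.IsHermitian)
    (h : (A - 1).PosSemidef) (i : n) : 1 ≤ hA.eigenvalues i := by
  have hu : (hA.eigenvectorBasis i : n → ℝ) ⬝ᵥ hA.eigenvectorBasis i = 1 := by
    have := real_inner_self_eq_norm_sq (hA.eigenvectorBasis i)
    rw [EuclideanSpace.inner_eq_star_dotProduct, hA.eigenvectorBasis.orthonormal.1 i] at this
    simpa using this
  simpa [sub_mulVec, hA.mulVec_eigenvectorBasis i, hu] using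
    h.dotProduct_mulVec_nonneg (hA.eigenvectorBasis i)

section RankOne

variable (x : n → ℝ) {s : ℝ}

lemma posDef_one_add_smul_vecMulVec_self (hs : 0 ≤ s) : (1 + s • vecMulVec x x).PosDef :=
  PosDef.one.add_posSemidef (posSemidef_smul_vecMulVec_self x hs)

variable (s)

lemma one_add_smul_vecMulVec_self_mulVec :
    (1 + s • vecMulVec x x) *ᵥ x = (1 + s * (x ⬝ᵥ x)) • x := by
  simp [add_mulVec, smul_mulVec, vecMulVec_mulVec, add_smul, smul_smul]

lemma trace_mul_one_add_smul_vecMulVec_self (A : Matrix n n ℝ) :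
    (A * (1 + s • vecMulVec x x)).trace = A.trace + s * (x ⬝ᵥ (A *ᵥ x)) := by
  simp [mul_add, mul_vecMulVec, dotProduct_comm]

end RankOne

end Matrix

open Matrix

variable {k : ℕ} {W : Matrix (Fin k) (Fin k) ℝ}

lemma descEig_of_isHermitian (hW : W.IsHermitian) (i : Fin k) :
    descEig W i = hW.eigenvalues (Tuple.sort hW.eigenvalues i.rev) := by
  simp only [descEig, dif_pos hW]
  rfl

lemma eigenvalues_le_descEig_zero (hW : W.IsHermitian) (j : Fin k) :
    hW.eigenvalues j ≤ descEig W ⟨0, j.pos⟩ := by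
  set σ := Tuple.sort hW.eigenvalues
  have hj : σ.symm j ≤ Fin.rev ⟨0, j.pos⟩ := by
    simp only [Fin.le_def, Fin.val_rev]
    omega
  simpa [descEig_of_isHermitian hW, σ] using Tuple.monotone_sort hW.eigenvalues hj

lemma log_le_sum_log_descEig {t : ℕ} (ht : 0 < t) (hW : W.IsHermitian) (h1 : (W - 1).PosSemidef)
    {μ : ℝ} (hμ : μ ∈ spectrum ℝ W) :
    Real.log μ ≤ ∑ i : Fin k, if (i : ℕ) < t then Real.log (descEig W i) else 0 := by
  obtain ⟨j, rfl⟩ := hW.spectrum_real_eq_range_eigenvalues ▸ hμ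
  have hterm_nonneg (i : Fin k) : 0 ≤ if (i : ℕ) < t then Real.log (descEig W i) else 0 := by
    split_ifs
    · exact Real.log_nonneg (descEig_of_isHermitian hW i ▸ hW.one_le_eigenvalues h1 _)
    · rfl
  calc Real.log (hW.eigenvalues j) ≤ Real.log (descEig W ⟨0, j.pos⟩) :=
        Real.log_le_log (by linarith [hW.one_le_eigenvalues h1 j])
          (eigenvalues_le_descEig_zero hW j)
    _ ≤ _ := by
        simpa [ht] using
          Finset.single_le_sum (fun i _ => hterm_nonneg i) (Finset.mem_univ ⟨0, j.pos⟩)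

/-- For a symmetric `Θ` that is not positive definite and `0 < t ≤ k`, the supremum over
positive semidefinite `W` with `rank W ≥ t` of `∑_{ℓ=1}^t log λ_ℓ(W) − Trace(Θ W)` is
`+∞`. -/
theorem stmt_4 (k t : ℕ) (ht : 0 < t) (htk : t ≤ k)
    (Θ : Matrix (Fin k) (Fin k) ℝ) (hsym : Θ.IsHermitian) (hnpd : ¬ Θ.PosDef) :
    ∀ M : ℝ, ∃ W : Matrix (Fin k) (Fin k) ℝ, W.PosSemidef ∧ t ≤ W.rank ∧
      M < (∑ i : Fin k, if (i : ℕ) < t then Real.log (descEig W i) else 0)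
            - (Θ * W).trace := by
  intro M
  obtain ⟨x, hx, hΘx⟩ := exists_dotProduct_mulVec_nonpos_of_not_posDef hsym hnpd
  have hxx : 0 < x ⬝ᵥ x := by simpa using dotProduct_star_self_pos_iff.2 hx
  set s := Real.exp (M + Θ.trace) / (x ⬝ᵥ x)
  have hs : 0 ≤ s := by positivity
  have hW := posDef_one_add_smul_vecMulVec_self x hs
  have hlog : M + Θ.trace < Real.log (1 + s * (x ⬝ᵥ x)) := by
    rw [div_mul_cancel₀ _ hxx.ne']
    exact (Real.lt_log_iff_exp_lt (by positivity)).2 (lt_one_add _)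
  have hsum := log_le_sum_log_descEig ht hW.isHermitian
    (by simpa using posSemidef_smul_vecMulVec_self x hs)
    (mem_spectrum_of_mulVec_eq_smul hx (one_add_smul_vecMulVec_self_mulVec x s))
  refine ⟨_, hW.posSemidef, ?_, ?_⟩
  · rw [rank_of_isUnit _ hW.isUnit, Fintype.card_fin]
    exact htk
  · rw [trace_mul_one_add_smul_vecMulVec_self]
    linarith [mul_nonpos_of_nonneg_of_nonpos hs hΘx]
end

section
/- Let λ ∈ ℝⁿ₊ with λ₁ ≥ ⋯ ≥ λ_δ > λ_{δ+1} = ⋯ = λ_r > λ_{r+1} = ⋯ = λ_n = 0. Then for t = r, the unique index ι satisfying λ_ι > (1/(t−ι))·Σ_{ℓ=ι+1}^n λ_ℓ ≥ λ_{ι+1} (with λ₀ = +∞) is exactly ι = δ. -/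
lemma sum_key (n r : ℕ) (lam : Fin n → ℝ) (hrn : r ≤ n)
    (hzero : ∀ i : Fin n, r ≤ (i : ℕ) → lam i = 0) (ι : ℕ) :
    (∑ ℓ : Fin n, if ι ≤ (ℓ : ℕ) then lam ℓ else 0)
      = ∑ ℓ ∈ Finset.Ico ι r, (if h : ℓ < n then lam ⟨ℓ, h⟩ else 0) := by
  set F : ℕ → ℝ := fun ℓ => if h : ℓ < n then lam ⟨ℓ, h⟩ else 0 with hF
  have h1 : (∑ ℓ : Fin n, if ι ≤ (ℓ : ℕ) then lam ℓ else 0)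
      = ∑ ℓ ∈ Finset.range n, (if ι ≤ ℓ then F ℓ else 0) := by
    rw [← Fin.sum_univ_eq_sum_range (fun ℓ => if ι ≤ ℓ then F ℓ else 0) n]
    apply Finset.sum_congr rfl
    intro i _
    simp [hF, i.isLt]
  rw [h1]
  have h2 : ∀ ℓ ∈ Finset.range n, (if ι ≤ ℓ then F ℓ else 0)
      = (if ℓ ∈ Finset.Ico ι r then F ℓ else 0) := by
    intro ℓ hℓ
    simp only [Finset.mem_Ico]
    by_cases h : ι ≤ ℓ
    · by_cases h' : ℓ < r
      · simp [h, h']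
      · have hz : F ℓ = 0 := by
          simp only [hF]
          split
          · exact hzero ⟨ℓ, by assumption⟩ (show r ≤ ℓ by omega)
          · rfl
        simp [h, h', hz]
    · simp [h]
  rw [Finset.sum_congr rfl h2, Finset.sum_ite_mem]
  congr 1
  rw [Finset.range_eq_Ico, Finset.Ico_inter_Ico]
  congr 1 <;> omega

/-- Let `lam ∈ ℝⁿ₊` be nonincreasing with `lam₁ ≥ ⋯ ≥ lam_δ > lam_{δ+1} = ⋯ = lam_r >
lam_{r+1} = ⋯ = lam_n = 0`. Then for `t = r`, the unique index `ι` satisfying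
`lam_ι > (1/(t-ι))·∑_{ℓ=ι+1}^n lam_ℓ ≥ lam_{ι+1}` (convention `lam₀ = +∞`) is exactly `δ`. -/
theorem stmt_9 (n r δ : ℕ) (lam : Fin n → ℝ)
    (hrn : r ≤ n) (hδr : δ < r)
    (hsort : ∀ i j : Fin n, i ≤ j → lam j ≤ lam i)
    (hpos : ∀ i : Fin n, (i : ℕ) < r → 0 < lam i)
    (hzero : ∀ i : Fin n, r ≤ (i : ℕ) → lam i = 0)
    (heq : ∀ i : Fin n, δ ≤ (i : ℕ) → (i : ℕ) < r → lam i = lam ⟨δ, by omega⟩)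
    (hgt : ∀ _ : 0 < δ, lam ⟨δ, by omega⟩ < lam ⟨δ - 1, by omega⟩) :
    (∃ hδt : δ < r,
      (∀ _ : 0 < δ,
        (∑ ℓ : Fin n, if δ ≤ (ℓ : ℕ) then lam ℓ else 0) / ((r : ℝ) - δ)
          < lam ⟨δ - 1, by omega⟩) ∧
      lam ⟨δ, by omega⟩ ≤
        (∑ ℓ : Fin n, if δ ≤ (ℓ : ℕ) then lam ℓ else 0) / ((r : ℝ) - δ)) ∧
    (∀ ι : ℕ,
      (∃ hι : ι < r,
        (∀ _ : 0 < ι,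
          (∑ ℓ : Fin n, if ι ≤ (ℓ : ℕ) then lam ℓ else 0) / ((r : ℝ) - ι)
            < lam ⟨ι - 1, by omega⟩) ∧
        lam ⟨ι, by omega⟩ ≤
          (∑ ℓ : Fin n, if ι ≤ (ℓ : ℕ) then lam ℓ else 0) / ((r : ℝ) - ι)) →
      ι = δ) := by
  have hδn : δ < n := lt_of_lt_of_le hδr hrn
  set lamδ := lam ⟨δ, hδn⟩ with hlamδ
  have hsumδ : (∑ ℓ : Fin n, if δ ≤ (ℓ : ℕ) then lam ℓ else 0) = ((r : ℝ) - δ) * lamδ := by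
    rw [sum_key n r lam hrn hzero δ]
    have hc : ∀ ℓ ∈ Finset.Ico δ r, (if h : ℓ < n then lam ⟨ℓ, h⟩ else 0) = lamδ := by
      intro ℓ hℓ
      simp only [Finset.mem_Ico] at hℓ
      have hln : ℓ < n := by omega
      simp only [hln, dif_pos]
      exact heq ⟨ℓ, hln⟩ hℓ.1 hℓ.2
    rw [Finset.sum_congr rfl hc, Finset.sum_const, Nat.card_Ico, nsmul_eq_mul]
    rw [Nat.cast_sub (le_of_lt hδr)]
  have hrδpos : (0:ℝ) < (r : ℝ) - δ := by
    have : (δ:ℝ) < r := by exact_mod_cast hδr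
    linarith
  have havgδ : (∑ ℓ : Fin n, if δ ≤ (ℓ : ℕ) then lam ℓ else 0) / ((r : ℝ) - δ) = lamδ := by
    rw [hsumδ]
    exact mul_div_cancel_left₀ _ (ne_of_gt hrδpos)
  constructor
  · exact ⟨hδr, fun h0 => by rw [havgδ]; exact hgt h0, by rw [havgδ]⟩
  · rintro ι ⟨hι, hleft, hright⟩
    by_contra hne
    have hιn : ι < n := lt_of_lt_of_le hι hrn
    rcases lt_or_gt_of_ne hne with hlt | hgt'
    · -- ι < δ : contradiction from hright
      set lamι := lam ⟨ι, hιn⟩ with hlamι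
      have h0δ : 0 < δ := by omega
      have hδ1n : δ - 1 < n := by omega
      have hιlamδ1 : lamδ < lam ⟨δ - 1, hδ1n⟩ := hgt h0δ
      have hle1 : lam ⟨δ - 1, hδ1n⟩ ≤ lamι :=
        hsort ⟨ι, hιn⟩ ⟨δ - 1, hδ1n⟩ (show ι ≤ δ - 1 by omega)
      have hδι : lamδ < lamι := lt_of_lt_of_le hιlamδ1 hle1
      have hsumbound : (∑ ℓ : Fin n, if ι ≤ (ℓ : ℕ) then lam ℓ else 0) < ((r:ℝ) - ι) * lamι := by
        rw [sum_key n r lam hrn hzero ι]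
        have hsplit : Finset.Ico ι r = Finset.Ico ι δ ∪ Finset.Ico δ r := by
          rw [Finset.Ico_union_Ico_eq_Ico (by omega) (le_of_lt hδr)]
        rw [hsplit, Finset.sum_union (Finset.Ico_disjoint_Ico_consecutive ι δ r)]
        have hb1 : (∑ ℓ ∈ Finset.Ico ι δ, if h : ℓ < n then lam ⟨ℓ, h⟩ else 0)
            ≤ ((δ - ι : ℕ) : ℝ) * lamι := by
          rw [← nsmul_eq_mul, ← Nat.card_Ico ι δ, ← Finset.sum_const]
          apply Finset.sum_le_sum
          intro ℓ hℓ
          simp only [Finset.mem_Ico] at hℓ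
          have hln : ℓ < n := by omega
          simp only [hln, dif_pos]
          exact hsort ⟨ι, hιn⟩ ⟨ℓ, hln⟩ (show ι ≤ ℓ from hℓ.1)
        have hb2 : (∑ ℓ ∈ Finset.Ico δ r, if h : ℓ < n then lam ⟨ℓ, h⟩ else 0)
            < ((r - δ : ℕ) : ℝ) * lamι := by
          have hc : ∀ ℓ ∈ Finset.Ico δ r, (if h : ℓ < n then lam ⟨ℓ, h⟩ else 0) = lamδ := by
            intro ℓ hℓ
            simp only [Finset.mem_Ico] at hℓ
            have hln : ℓ < n := by omega
            simp only [hln, dif_pos]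
            exact heq ⟨ℓ, hln⟩ hℓ.1 hℓ.2
          rw [Finset.sum_congr rfl hc, Finset.sum_const, Nat.card_Ico, nsmul_eq_mul]
          have hcard : (0:ℝ) < ((r - δ : ℕ) : ℝ) := by
            have : 0 < r - δ := by omega
            exact_mod_cast this
          exact mul_lt_mul_of_pos_left hδι hcard
        have hmul : ((δ - ι : ℕ) : ℝ) * lamι + ((r - δ : ℕ) : ℝ) * lamι = ((r:ℝ) - ι) * lamι := by
          rw [← add_mul]
          congr 1
          rw [Nat.cast_sub (by omega : ι ≤ δ), Nat.cast_sub (le_of_lt hδr)]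
          ring
        linarith
      have hrιpos : (0:ℝ) < (r : ℝ) - ι := by
        have : (ι:ℝ) < r := by exact_mod_cast hι
        linarith
      rw [le_div_iff₀ hrιpos] at hright
      nlinarith
    · -- ι > δ : contradiction from hleft
      have h0ι : 0 < ι := by omega
      have hι1n : ι - 1 < n := by omega
      have hsumι : (∑ ℓ : Fin n, if ι ≤ (ℓ : ℕ) then lam ℓ else 0) = ((r : ℝ) - ι) * lamδ := by
        rw [sum_key n r lam hrn hzero ι]
        have hc : ∀ ℓ ∈ Finset.Ico ι r, (if h : ℓ < n then lam ⟨ℓ, h⟩ else 0) = lamδ := by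
          intro ℓ hℓ
          simp only [Finset.mem_Ico] at hℓ
          have hln : ℓ < n := by omega
          simp only [hln, dif_pos]
          exact heq ⟨ℓ, hln⟩ (show δ ≤ ℓ by omega) hℓ.2
        rw [Finset.sum_congr rfl hc, Finset.sum_const, Nat.card_Ico, nsmul_eq_mul]
        rw [Nat.cast_sub (le_of_lt hι)]
      have hrιpos : (0:ℝ) < (r : ℝ) - ι := by
        have : (ι:ℝ) < r := by exact_mod_cast hι
        linarith
      have havgι : (∑ ℓ : Fin n, if ι ≤ (ℓ : ℕ) then lam ℓ else 0) / ((r : ℝ) - ι) = lamδ := by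
        rw [hsumι]
        exact mul_div_cancel_left₀ _ (ne_of_gt hrιpos)
      have h1 := hleft h0ι
      rw [havgι] at h1
      have h2 : lam ⟨ι - 1, hι1n⟩ = lamδ :=
        heq ⟨ι - 1, hι1n⟩ (show δ ≤ ι - 1 by omega) (show ι - 1 < r by omega)
      rw [h2] at h1
      exact lt_irrefl _ h1
end

section
/- Let λ ∈ ℝⁿ₊ with λ₁ ≥ ⋯ ≥ λ_r > 0 = λ_{r+1} = ⋯ = λ_n, let 0 < t < r, let ι be the unique index with λ_ι > (1/(t−ι))·Σ_{ℓ=ι+1}^n λ_ℓ ≥ λ_{ι+1} (convention λ₀ = +∞), and define φ_t(λ) = Σ_{ℓ=1}^ι log(λ_ℓ) + (t−ι)·log((1/(t−ι))·Σ_{ℓ=ι+1}^n λ_ℓ). Then φ_t(λ) > Σ_{ℓ=1}^t log(λ_ℓ). -/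
/-- Let `lam ∈ ℝⁿ₊` be nonincreasing with exactly `r` positive entries, `0 < t < r`, and
let `ι` be the unique index with `lam_ι > (1/(t-ι))·∑_{ℓ=ι+1}^n lam_ℓ ≥ lam_{ι+1}`
(convention `lam₀ = +∞`). Then
`φ_t(lam) = ∑_{ℓ=1}^ι log lam_ℓ + (t-ι)·log((1/(t-ι))·∑_{ℓ=ι+1}^n lam_ℓ) > ∑_{ℓ=1}^t log lam_ℓ`. -/
theorem stmt_11 (n r t ι : ℕ) (lam : Fin n → ℝ)
    (hrn : r ≤ n) (ht : 0 < t) (htr : t < r)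
    (hsort : ∀ i j : Fin n, i ≤ j → lam j ≤ lam i)
    (hpos : ∀ i : Fin n, (i : ℕ) < r → 0 < lam i)
    (hzero : ∀ i : Fin n, r ≤ (i : ℕ) → lam i = 0)
    (hι : ι < t)
    (hcond1 : ∀ _ : 0 < ι,
      (∑ ℓ : Fin n, if ι ≤ (ℓ : ℕ) then lam ℓ else 0) / ((t : ℝ) - ι)
        < lam ⟨ι - 1, by omega⟩)
    (hcond2 : lam ⟨ι, by omega⟩ ≤
      (∑ ℓ : Fin n, if ι ≤ (ℓ : ℕ) then lam ℓ else 0) / ((t : ℝ) - ι)) :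
    (∑ i : Fin n, if (i : ℕ) < t then Real.log (lam i) else 0) <
      (∑ i : Fin n, if (i : ℕ) < ι then Real.log (lam i) else 0)
        + ((t : ℝ) - ι) *
            Real.log ((∑ ℓ : Fin n, if ι ≤ (ℓ : ℕ) then lam ℓ else 0) / ((t : ℝ) - ι)) := by
  have htn : t < n := lt_of_lt_of_le htr hrn
  have hιn : ι < n := lt_trans hι htn
  set S : ℝ := ∑ ℓ : Fin n, if ι ≤ (ℓ : ℕ) then lam ℓ else 0 with hS
  have hd : (0:ℝ) < (t : ℝ) - ι := by
    have : (ι:ℝ) < t := by exact_mod_cast hι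
    linarith
  set μ : ℝ := S / ((t : ℝ) - ι) with hμ
  have hlam_iota : 0 < lam ⟨ι, hιn⟩ := hpos _ (by simpa using lt_trans hι htr)
  have hμpos : 0 < μ := lt_of_lt_of_le hlam_iota hcond2
  have hnn : ∀ i : Fin n, 0 ≤ lam i := by
    intro i
    rcases lt_or_ge (i : ℕ) r with h | h
    · exact (hpos i h).le
    · simp [hzero i h]
  -- T : indices ι ≤ i < t
  set T : Finset (Fin n) := Finset.univ.filter (fun i : Fin n => ι ≤ (i:ℕ) ∧ (i:ℕ) < t) with hT
  have hTIco : T = Finset.Ico (⟨ι, hιn⟩ : Fin n) ⟨t, htn⟩ := by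
    ext i
    simp [hT, Finset.mem_Ico, Fin.le_def, Fin.lt_def]
  have hTcard : T.card = t - ι := by
    rw [hTIco, Fin.card_Ico]
  -- each λ_i ≤ μ on T
  have hle : ∀ i ∈ T, lam i ≤ μ := by
    intro i hi
    simp only [hT, Finset.mem_filter] at hi
    refine le_trans (hsort ⟨ι, hιn⟩ i ?_) hcond2
    exact (Fin.le_def).mpr hi.2.1
  have hposT : ∀ i ∈ T, 0 < lam i := by
    intro i hi
    simp only [hT, Finset.mem_filter] at hi
    exact hpos i (lt_trans hi.2.2 htr)
  -- S as filtered sum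
  have hSfilter : S = ∑ i ∈ Finset.univ.filter (fun i : Fin n => ι ≤ (i:ℕ)), lam i := by
    rw [hS, Finset.sum_filter]
  have hdμ : ((t:ℝ) - ι) * μ = S := by
    rw [hμ]; field_simp
  -- exists strict
  have hex : ∃ i ∈ T, lam i < μ := by
    by_contra hcon
    push_neg at hcon
    have heq : ∀ i ∈ T, lam i = μ := fun i hi => le_antisymm (hle i hi) (hcon i hi)
    have hsumT : ∑ i ∈ T, lam i = S := by
      rw [Finset.sum_congr rfl heq, Finset.sum_const, hTcard, nsmul_eq_mul, ← hdμ]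
      congr 1
      push_cast [Nat.cast_sub hι.le]
      ring
    set tf : Fin n := ⟨t, htn⟩ with htf
    have htfT : tf ∉ T := by simp [hT, htf]
    have hsub : insert tf T ⊆ Finset.univ.filter (fun i : Fin n => ι ≤ (i:ℕ)) := by
      intro i hi
      rcases Finset.mem_insert.mp hi with h | h
      · simp [h, htf, hι.le]
      · simp only [hT, Finset.mem_filter] at h
        simp [h.2.1]
    have hge : ∑ i ∈ insert tf T, lam i ≤ S := by
      rw [hSfilter]
      exact Finset.sum_le_sum_of_subset_of_nonneg hsub (fun i _ _ => hnn i)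
    rw [Finset.sum_insert htfT, hsumT] at hge
    have : 0 < lam tf := hpos tf htr
    linarith
  -- main strict sum inequality
  have hkey : ∑ i ∈ T, Real.log (lam i) < ((t:ℝ) - ι) * Real.log μ := by
    have := Finset.sum_lt_sum (f := fun i => Real.log (lam i)) (g := fun _ => Real.log μ)
      (fun i hi => Real.log_le_log (hposT i hi) (hle i hi))
      (by
        obtain ⟨i, hi, hlt⟩ := hex
        exact ⟨i, hi, Real.log_lt_log (hposT i hi) hlt⟩)
    rw [Finset.sum_const, hTcard, nsmul_eq_mul] at this
    calc ∑ i ∈ T, Real.log (lam i) < ((t - ι : ℕ) : ℝ) * Real.log μ := this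
      _ = ((t:ℝ) - ι) * Real.log μ := by rw [Nat.cast_sub hι.le]
  -- split the LHS sum
  have hsplit : (∑ i : Fin n, if (i : ℕ) < t then Real.log (lam i) else 0)
      = (∑ i : Fin n, if (i : ℕ) < ι then Real.log (lam i) else 0)
        + ∑ i ∈ T, Real.log (lam i) := by
    have hpt : ∀ i : Fin n, (if (i:ℕ) < t then Real.log (lam i) else 0)
        = (if (i:ℕ) < ι then Real.log (lam i) else 0)
          + (if ι ≤ (i:ℕ) ∧ (i:ℕ) < t then Real.log (lam i) else 0) := by
      intro i
      split_ifs <;> first | omega | ring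
    rw [hT, Finset.sum_filter]
    simp_rw [hpt]
    rw [Finset.sum_add_distrib]
  rw [hsplit]
  linarith [hkey]
end
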